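/- arXiv:1412.2582 — 2 statements merged into one kernel-verified Lean document; each statement's English description precedes it below -/
import Mathlib

section
/- Let X ⊆ A^G be an effectively closed subshift over a finitely generated group G. Then there exists a decidable set C of pattern codings such that X = X_C. -/
open scoped Classical

noncomputable section

namespace SDG

/-! ### Relativized computability -/

/-- Partial recursive functions `ℕ →. ℕ` relative to an oracle `O`. -/
inductive NatPartrecIn (O : ℕ →. ℕ) : (ℕ →. ℕ) → Prop
  | oracle : NatPartrecIn O O
  | zero : NatPartrecIn O (pure 0)
  | succ : NatPartrecIn O Nat.succ
  | left : NatPartrecIn O ↑fun n : ℕ => n.unpair.1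
  | right : NatPartrecIn O ↑fun n : ℕ => n.unpair.2
  | pair {f g} : NatPartrecIn O f → NatPartrecIn O g →
      NatPartrecIn O fun n => Nat.pair <$> f n <*> g n
  | comp {f g} : NatPartrecIn O f → NatPartrecIn O g →
      NatPartrecIn O fun n => g n >>= f
  | prec {f g} : NatPartrecIn O f → NatPartrecIn O g →
      NatPartrecIn O (Nat.unpaired fun a n =>
        n.rec (f a) fun y IH => do let i ← IH; g (Nat.pair a (Nat.pair y i)))
  | rfind {f} : NatPartrecIn O f →
      NatPartrecIn O fun a => Nat.rfind fun n => (fun m => m = 0) <$> f (Nat.pair a n)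

/-- A partial function between `Primcodable` types is partial recursive in the oracle `O`. -/
def PartrecIn (O : ℕ →. ℕ) {α σ : Type} [Primcodable α] [Primcodable σ] (f : α →. σ) : Prop :=
  NatPartrecIn O fun n =>
    Part.bind (Part.ofOption (Encodable.decode (α := α) n)) fun a => (f a).map Encodable.encode

/-- A predicate is recursively enumerable in the oracle `O` if it is the domain of a partial
function recursive in `O`. -/
def RePredIn (O : ℕ →. ℕ) {α : Type} [Primcodable α] (p : α → Prop) : Prop :=
  PartrecIn O fun a => Part.assert (p a) fun _ => Part.some ()

/-- The characteristic function (as an oracle `ℕ →. ℕ`) of a set `L` of elements of a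
`Primcodable` type: on the code of an element of `L` it answers `1`, elsewhere `0`. -/
def charFun {α : Type} [Primcodable α] (L : Set α) : ℕ →. ℕ :=
  fun n => Part.some (if ∃ a ∈ L, Encodable.encode a = n then 1 else 0)

/-! ### Finitely generated groups, words and pattern codings -/

variable {G : Type} [Group G]

/-- The group element represented by a word over the generators `S`. -/
def wordEval {k : ℕ} (S : Fin k → G) (w : List (Fin k)) : G :=
  (w.map S).prod

/-- `S : Fin k → G` is a finite symmetric generating family containing the identity. -/
def IsGenData {k : ℕ} (S : Fin k → G) : Prop :=
  (∃ i, S i = 1) ∧ (∀ i, ∃ j, S j = (S i)⁻¹) ∧ Subgroup.closure (Set.range S) = ⊤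

/-- The word problem of `G` with respect to the generating family `S`. -/
def WP {k : ℕ} (S : Fin k → G) : Set (List (Fin k)) :=
  {w | wordEval S w = 1}

/-- A pattern coding over the alphabet `A`: a finite list of pairs (word, symbol). -/
abbrev PatternCoding (k : ℕ) (A : Type) : Type :=
  List (List (Fin k) × A)

/-- The subshift defined by a set `C` of pattern codings: configurations in which no translate
of a coded pattern occurs. -/
def XC {k : ℕ} (S : Fin k → G) {A : Type} (C : Set (PatternCoding k A)) : Set (G → A) :=
  {x | ¬ ∃ (g : G) (c : PatternCoding k A), c ∈ C ∧ ∀ p ∈ c, x (g * wordEval S p.1) = p.2}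

/-- A set is effectively closed if it is defined by a recursively enumerable set of
pattern codings. -/
def EffectivelyClosed {k : ℕ} (S : Fin k → G) {A : Type} [Primcodable A]
    (X : Set (G → A)) : Prop :=
  ∃ C : Set (PatternCoding k A), REPred (· ∈ C) ∧ X = XC S C

/-- A set is `G`-effectively closed if it is defined by a set of pattern codings which is
recursively enumerable with oracle the word problem of `G`. -/
def GEffectivelyClosed {k : ℕ} (S : Fin k → G) {A : Type} [Primcodable A]
    (X : Set (G → A)) : Prop :=
  ∃ C : Set (PatternCoding k A), RePredIn (charFun (WP S)) (· ∈ C) ∧ X = XC S C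

/-- A pattern coding is consistent if words representing the same group element receive the
same symbol. -/
def Consistent {k : ℕ} (S : Fin k → G) {A : Type} (c : PatternCoding k A) : Prop :=
  ∀ p ∈ c, ∀ q ∈ c, wordEval S p.1 = wordEval S q.1 → p.2 = q.2

/-! ### Subshifts, SFTs, sofic subshifts -/

/-- `X ⊆ A^G` is a subshift: closed (for the product of the discrete topology) and
shift-invariant. -/
def IsSubshift {A : Type} (X : Set (G → A)) : Prop :=
  (letI : TopologicalSpace A := ⊥; IsClosed X) ∧
    ∀ x ∈ X, ∀ g : G, (fun h => x (g⁻¹ * h)) ∈ X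

/-- A pattern with finite support over the alphabet `A`. -/
structure Pattern (G : Type) (A : Type) where
  supp : Finset G
  val : (g : G) → g ∈ supp → A

/-- The pattern `p` occurs in the configuration `x` at position `g`. -/
def PatternOccurs {A : Type} (p : Pattern G A) (x : G → A) (g : G) : Prop :=
  ∀ (h : G) (hh : h ∈ p.supp), x (g * h) = p.val h hh

/-- The subshift defined by a set of forbidden patterns. -/
def XPat {A : Type} (Fs : Set (Pattern G A)) : Set (G → A) :=
  {x | ¬ ∃ (g : G) (p : Pattern G A), p ∈ Fs ∧ PatternOccurs p x g}

/-- A subshift of finite type: defined by a finite set of forbidden patterns. -/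
def IsSFT {A : Type} (X : Set (G → A)) : Prop :=
  ∃ Fs : Set (Pattern G A), Fs.Finite ∧ X = XPat Fs

/-- A witness that `X` is sofic: an SFT `Y` over a finite alphabet `B` together with a factor
code (continuous shift-equivariant surjection) from `Y` onto `X`. -/
structure SoficVia (G : Type) [Group G] {A : Type} (X : Set (G → A)) : Type 1 where
  B : Type
  finB : Fintype B
  Y : Set (G → B)
  sft : IsSFT Y
  subY : IsSubshift Y
  phi : (G → B) → (G → A)
  cont : letI : TopologicalSpace B := ⊥
         letI : TopologicalSpace A := ⊥
         ContinuousOn phi Y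
  equiv : ∀ y ∈ Y, ∀ g : G, phi (fun h => y (g⁻¹ * h)) = fun h => phi y (g⁻¹ * h)
  image : phi '' Y = X

/-- A subshift is sofic if it is the image of an SFT under a factor code. -/
def IsSofic {A : Type} (X : Set (G → A)) : Prop :=
  Nonempty (SoficVia G X)

/-- A factor code from `X` onto `Y`: continuous (discrete product topologies),
shift-equivariant and surjective. -/
def FactorCode {A B : Type} (X : Set (G → A)) (Y : Set (G → B))
    (φ : (G → A) → (G → B)) : Prop :=
  (letI : TopologicalSpace A := ⊥
   letI : TopologicalSpace B := ⊥
   ContinuousOn φ X) ∧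
  (∀ x ∈ X, ∀ g : G, φ (fun h => x (g⁻¹ * h)) = fun h => φ x (g⁻¹ * h)) ∧
  φ '' X = Y

/-- Two subshifts are conjugate if there is a shift-equivariant homeomorphism between them. -/
def Conjugate {A B : Type} (X : Set (G → A)) (Y : Set (G → B)) : Prop :=
  ∃ (φ : (G → A) → (G → B)) (ψ : (G → B) → (G → A)),
    FactorCode X Y φ ∧ FactorCode Y X ψ ∧
    (∀ x ∈ X, ψ (φ x) = x) ∧ (∀ y ∈ Y, φ (ψ y) = y)

/-- The one-or-less subshift: configurations with at most one occurrence of the symbol `1`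
(represented by `true`). -/
def Xle1 (G : Type) : Set (G → Bool) :=
  {x | ∀ g h : G, x g = true → x h = true → g = h}

/-! ### `G`-machines -/

/-- A `G`-machine: finite set of states, finite tape alphabet `A` with a blank symbol, initial
state, accepting states, and a transition function moving with the generators `Fin k`. -/
structure GMachine (k : ℕ) (A : Type) : Type 1 where
  Q : Type
  finQ : Fintype Q
  blank : A
  q0 : Q
  QF : Set Q
  delta : A × Q → A × Q × Fin k

/-- One step of a `G`-machine in the fixed head model: if `δ(x(1),q) = (a,q',s)` then the new
configuration is `σ_{s⁻¹} x̃` where `x̃` is `x` with the value at `1` replaced by `a`. -/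
def GMachine.step {k : ℕ} {A : Type} (M : GMachine k A) (S : Fin k → G) :
    (G → A) × M.Q → (G → A) × M.Q :=
  fun xq =>
    let t := M.delta (xq.1 1, xq.2)
    let xt : G → A := Function.update xq.1 1 t.1
    (fun h => xt (S t.2.2 * h), t.2.1)

/-- The configuration which equals the pattern `p` on its support and `blank` elsewhere. -/
def Pattern.config {A : Type} (p : Pattern G A) (blank : A) : G → A :=
  fun g => if h : g ∈ p.supp then p.val g h else blank

/-- The `G`-machine `M` accepts the pattern `p` if starting from the configuration `x^p` in the
initial state it eventually reaches an accepting state. -/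
def GMachine.Accepts {k : ℕ} {A : Type} (M : GMachine k A) (S : Fin k → G)
    (p : Pattern G A) : Prop :=
  ∃ n : ℕ, ((M.step S)^[n] (p.config M.blank, M.q0)).2 ∈ M.QF

/-- A set of patterns is `G`-recursively enumerable if some `G`-machine accepts exactly its
elements. -/
def GRecEnum {k : ℕ} (S : Fin k → G) {A : Type} (L : Set (Pattern G A)) : Prop :=
  ∃ M : GMachine k A, ∀ p : Pattern G A, M.Accepts S p ↔ p ∈ L

/-- The consistent pattern coding `c` defines the pattern `p`. -/
def Defines {k : ℕ} (S : Fin k → G) {A : Type} (c : PatternCoding k A)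
    (p : Pattern G A) : Prop :=
  (∀ g : G, g ∈ p.supp ↔ ∃ q ∈ c, wordEval S q.1 = g) ∧
  ∀ q ∈ c, ∀ hg : wordEval S q.1 ∈ p.supp, p.val (wordEval S q.1) hg = q.2

/-- `p(C)`: the set of patterns defined by the consistent pattern codings of `C`. -/
def patternsOf {k : ℕ} (S : Fin k → G) {A : Type} (C : Set (PatternCoding k A)) :
    Set (Pattern G A) :=
  {p | ∃ c ∈ C, Consistent S c ∧ Defines S c p}

/-- A set of patterns is closed by extensions if any pattern extending a pattern of the set
also belongs to the set. -/
def ClosedByExtensions {A : Type} (L : Set (Pattern G A)) : Prop :=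
  ∀ (p₁ p₂ : Pattern G A) (hsub : p₁.supp ⊆ p₂.supp),
    (∀ (g : G) (hg : g ∈ p₁.supp), p₂.val g (hsub hg) = p₁.val g hg) →
    p₁ ∈ L → p₂ ∈ L

/-! ### Balls, ends, amenability -/

/-- The ball of radius `n` in the word metric given by `S`. -/
def ballS {k : ℕ} (S : Fin k → G) (n : ℕ) : Set G :=
  {x | ∃ w : List (Fin k), w.length ≤ n ∧ wordEval S w = x}

/-- Adjacency in the Cayley graph restricted to the set `V`. -/
def Adj {k : ℕ} (S : Fin k → G) (V : Set G) (a b : G) : Prop :=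
  a ∈ V ∧ b ∈ V ∧ ∃ i, a * S i = b

/-- Reachability inside `V` in the Cayley graph of `(G,S)`. -/
def Reach {k : ℕ} (S : Fin k → G) (V : Set G) (a b : G) : Prop :=
  Relation.ReflTransGen (Adj S V) a b

/-- `G` has at least two ends: for some `n`, the complement of the ball of radius `n` in the
Cayley graph has at least two infinite connected components. -/
def HasTwoOrMoreEnds {k : ℕ} (S : Fin k → G) : Prop :=
  ∃ (n : ℕ) (x y : G), x ∉ ballS S n ∧ y ∉ ballS S n ∧
    {z | Reach S (ballS S n)ᶜ x z}.Infinite ∧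
    {z | Reach S (ballS S n)ᶜ y z}.Infinite ∧
    ¬ Reach S (ballS S n)ᶜ x y

/-- The Følner condition: `G` is amenable. -/
def FolnerAmenable (G : Type) [Group G] : Prop :=
  ∀ (K : Finset G) (ε : ℝ), 0 < ε →
    ∃ F : Finset G, F.Nonempty ∧ ∀ k ∈ K,
      ((F \ F.image (fun x => x * k)).card : ℝ) < ε * F.card

/-! ### `G × ℤ`, presentations, hardness and the domino problems -/

/-- Generators of `G × ℤ`: the generators of `G` paired with `0`, together with `(1,±1)`. -/
def prodGens {k : ℕ} (S : Fin k → G) : Fin (k + 2) → G × Multiplicative ℤ :=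
  fun i =>
    if h : (i : ℕ) < k then (S ⟨i, h⟩, 1)
    else if (i : ℕ) = k then (1, Multiplicative.ofAdd 1)
    else (1, Multiplicative.ofAdd (-1))

/-- The element of the free group over the generator indices represented by a word. -/
def freeWord {k : ℕ} (w : List (Fin k)) : FreeGroup (Fin k) :=
  (w.map FreeGroup.of).prod

/-- `G` is recursively presented with respect to `S`: there is a recursively enumerable set of
relators (words over the generators) whose normal closure in the free group over the
generator indices is the kernel of the evaluation map. -/
def RecursivelyPresented {k : ℕ} (S : Fin k → G) : Prop :=
  ∃ R : Set (List (Fin k)), REPred (· ∈ R) ∧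
    MonoidHom.ker (FreeGroup.lift S) = Subgroup.normalClosure (freeWord '' R)

/-- `L` is hard for the class of predicates recursively enumerable in the oracle `O`
(equivalently, hard for the halting problem of machines with oracle `O`): every
such predicate many-one reduces to `L` via a computable function. -/
def OracleREHard {α : Type} [Primcodable α] (O : ℕ →. ℕ) (L : Set α) : Prop :=
  ∀ p : ℕ → Prop, RePredIn O p → ∃ f : ℕ → α, Computable f ∧ ∀ n, p n ↔ f n ∈ L

/-- The domino problem of `(K,T)`: pairs `(N, F)` of an alphabet size and a finite list of
pattern codings over `ℕ` such that no configuration with symbols `< N` avoids `F`. -/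
def DP {K : Type} [Group K] {m : ℕ} (T : Fin m → K) : Set (ℕ × List (PatternCoding m ℕ)) :=
  {q | ¬ ∃ x : K → ℕ, (∀ g, x g < q.1) ∧ x ∈ XC T {c | c ∈ q.2}}

/-- The origin constrained domino problem of `(K,T)`: triples `((N,a),F)` such that no
configuration with symbols `< N` and the symbol `a` at the origin avoids `F`. -/
def OCDP {K : Type} [Group K] {m : ℕ} (T : Fin m → K) :
    Set ((ℕ × ℕ) × List (PatternCoding m ℕ)) :=
  {q | ¬ ∃ x : K → ℕ, (∀ g, x g < q.1.1) ∧ x 1 = q.1.2 ∧ x ∈ XC T {c | c ∈ q.2}}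

/-!
Enumerate the r.e. set `C` of forbidden codings by a primitive recursive certificate "`c` is
accepted within `t` steps". Prefixing `t` dummy entries `([], a)` to `c` changes the occurrences of
`c` only by requiring the symbol `a` at the origin, and makes the search for a certificate bounded
by the length of the padded coding. The padded codings therefore form a decidable set, and since
`a` ranges over all symbols they forbid exactly the same configurations as `C`.
-/

open Nat.Partrec.Code in
theorem _root_.Partrec.exists_primrecRel_dom_iff {α σ : Type} [Primcodable α] [Primcodable σ]
    {f : α →. σ} (hf : Partrec f) :
    ∃ R : α → ℕ → Prop, PrimrecRel R ∧ ∀ a, (f a).Dom ↔ ∃ t, R a t := by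
  obtain ⟨e, he⟩ := Nat.Partrec.Code.exists_code.1 hf
  refine ⟨fun a t => (evaln t e (Encodable.encode a)).isSome, ?_, fun a => ?_⟩
  · refine Primrec.primrecPred ?_
    simpa using Primrec.option_isSome.comp (primrec_evaln.comp
      ((Primrec.snd.pair (Primrec.const e)).pair (Primrec.encode.comp Primrec.fst)))
  · have heval : eval e (Encodable.encode a) = (f a).map Encodable.encode := by
      simp [he, Encodable.encodek]
    calc (f a).Dom ↔ (eval e (Encodable.encode a)).Dom := by rw [heval]; rfl
      _ ↔ ∃ t, (evaln t e (Encodable.encode a)).isSome := by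
        simp only [Part.dom_iff_mem, evaln_complete, Option.isSome_iff_exists]
        exact exists_comm

theorem _root_.REPred.exists_primrecRel_iff {α : Type} [Primcodable α] {p : α → Prop}
    (hp : REPred p) : ∃ R : α → ℕ → Prop, PrimrecRel R ∧ ∀ a, p a ↔ ∃ t, R a t := by
  obtain ⟨R, hR, hdom⟩ := Partrec.exists_primrecRel_dom_iff hp
  exact ⟨R, hR, fun a => Iff.trans ⟨fun h => ⟨h, trivial⟩, fun ⟨h, _⟩ => h⟩ (hdom a)⟩

def paddedCodes {β : Type} (R : List β → ℕ → Prop) : Set (List β) :=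
  {d | ∃ m ≤ d.length, R (d.drop m) m}

theorem computablePred_mem_paddedCodes {β : Type} [Primcodable β] {R : List β → ℕ → Prop}
    (hR : PrimrecRel R) : ComputablePred (· ∈ paddedCodes R) := by
  have hdrop : PrimrecRel fun (m : ℕ) (d : List β) => R (d.drop m) m :=
    hR.comp₂ Primrec.list_drop Primrec.fst
  refine ((hdrop.exists_mem_list.comp (Primrec.list_range.comp
    (Primrec.succ.comp Primrec.list_length)) Primrec.id).of_eq fun d => ?_).computablePred
  simp [paddedCodes]

theorem replicate_append_mem_paddedCodes {β : Type} {R : List β → ℕ → Prop} {c : List β} {t : ℕ}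
    (h : R c t) (b : β) : List.replicate t b ++ c ∈ paddedCodes R :=
  ⟨t, by simp, by simpa using h⟩

theorem XC_subset_XC_of_forall_exists_subset {G : Type} [Group G] {k : ℕ} (S : Fin k → G)
    {A : Type} {C D : Set (PatternCoding k A)} (h : ∀ d ∈ D, ∃ c ∈ C, c ⊆ d) :
    XC S C ⊆ XC S D := by
  rintro x hx ⟨g, d, hd, hocc⟩
  obtain ⟨c, hc, hcd⟩ := h d hd
  exact hx ⟨g, c, hc, fun p hp => hocc p (hcd hp)⟩

theorem XC_subset_XC_of_forall_exists_padding {G : Type} [Group G] {k : ℕ} (S : Fin k → G)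
    {A : Type} {C D : Set (PatternCoding k A)}
    (h : ∀ c ∈ C, ∀ a : A, ∃ d ∈ D, ∀ p ∈ d, p ∈ c ∨ p = ([], a)) :
    XC S D ⊆ XC S C := by
  rintro x hx ⟨g, c, hc, hocc⟩
  obtain ⟨d, hd, hdc⟩ := h c hc (x g)
  refine hx ⟨g, d, hd, fun p hp => ?_⟩
  rcases hdc p hp with hpc | rfl
  · exact hocc p hpc
  · simp [wordEval]

theorem effectivelyClosed_has_decidable_codings_general
    {G : Type} [Group G] {k : ℕ} (S : Fin k → G)
    {A : Type} [Primcodable A] (X : Set (G → A))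
    (hX : EffectivelyClosed S X) :
    ∃ C : Set (PatternCoding k A), ComputablePred (· ∈ C) ∧ X = XC S C := by
  obtain ⟨C, hC, rfl⟩ := hX
  obtain ⟨R, hR, hCR⟩ := hC.exists_primrecRel_iff
  refine ⟨paddedCodes R, computablePred_mem_paddedCodes hR, subset_antisymm ?_ ?_⟩
  · refine XC_subset_XC_of_forall_exists_subset S fun d ⟨m, _, hm⟩ => ?_
    exact ⟨d.drop m, (hCR _).2 ⟨m, hm⟩, fun _ => List.mem_of_mem_drop⟩
  · refine XC_subset_XC_of_forall_exists_padding S fun c hc a => ?_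
    obtain ⟨t, ht⟩ := (hCR c).1 hc
    refine ⟨_, replicate_append_mem_paddedCodes ht ([], a), fun p hp => ?_⟩
    rcases List.mem_append.1 hp with hpad | hpc
    · exact Or.inr (List.eq_of_mem_replicate hpad)
    · exact Or.inl hpc

/-- Every effectively closed subshift over a finitely generated group can be
defined by a decidable set of pattern codings. -/
theorem effectivelyClosed_has_decidable_codings
    {G : Type} [Group G] {k : ℕ} (S : Fin k → G) (hS : IsGenData S)
    {A : Type} [Fintype A] [Primcodable A] (X : Set (G → A))
    (hsub : IsSubshift X) (hX : EffectivelyClosed S X) :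
    ∃ C : Set (PatternCoding k A), ComputablePred (· ∈ C) ∧ X = XC S C :=
  effectivelyClosed_has_decidable_codings_general S X hX

end SDG
end
end

section
/- Let G be a finitely generated group and A a finite alphabet with at least two symbols. The following are equivalent: (1) G is recursively presented, i.e. G ≅ ⟨S | R⟩ for some recursively enumerable set of relators R ⊆ S*; (2) the word problem WP(G) is recursively enumerable; (3) the set of inconsistent pattern codings over A is recursively enumerable. -/
open scoped Classical

noncomputable section

namespace SDG

/-! ### Finitely generated groups, words and pattern codings -/

variable {G : Type} [Group G]

/-!
If `S` is symmetric, every element of the free group on `S` is congruent to a positive word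
modulo the normal closure of the word problem, so the word problem is itself a set of defining
relators. Conversely, a word is trivial iff it is a product of conjugates of relators and their
inverses in the free group; such a product is a finite object, and equality in the free group
is decided by free reduction, so an r.e. set of relators yields an r.e. word problem.
A coding is inconsistent iff it has entries `(u, a)`, `(v, b)` with `a ≠ b` and `u v⁻¹`
trivial, and `w` is trivial iff `{(w, a), (ε, b)}` is inconsistent.
-/

section RecursivelyEnumerable

variable {α β : Type} [Primcodable α] [Primcodable β]

theorem REPred.comp {p : β → Prop} {f : α → β} (hp : REPred p) (hf : Computable f) :
    REPred fun a => p (f a) :=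
  Partrec.comp hp hf

open Nat.Partrec.Code in
theorem REPred.exists_primrecRel {p : α → Prop} (hp : REPred p) :
    ∃ q : α → ℕ → Prop, PrimrecRel q ∧ ∀ a, p a ↔ ∃ n, q a n := by
  obtain ⟨c, hc⟩ := exists_code.1 hp
  refine ⟨fun a n => (evaln n c (Encodable.encode a)).isSome, ?_, fun a => ?_⟩
  · have hrun : Primrec fun x : α × ℕ => (evaln x.2 c (Encodable.encode x.1)).isSome :=
      Primrec.option_isSome.comp (primrec_evaln.comp
        ((Primrec.snd.pair (Primrec.const c)).pair (Primrec.encode.comp Primrec.fst)))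
    exact Primrec.primrecPred (by simpa using hrun)
  · have hdom : p a ↔ (eval c (Encodable.encode a)).Dom := by
      simp [hc, Encodable.encodek, Part.assert]
    simp only [hdom, Part.dom_iff_mem, Option.isSome_iff_exists, evaln_complete]
    exact ⟨fun ⟨x, n, hn⟩ => ⟨n, x, hn⟩, fun ⟨n, x, hn⟩ => ⟨x, n, hn⟩⟩

theorem REPred.of_exists_primrecRel {p : α → Prop} {q : α → β → Prop} (hq : PrimrecRel q)
    (h : ∀ a, p a ↔ ∃ b, q a b) : REPred p := by
  let test : α → ℕ → Bool := fun a n =>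
    Option.casesOn (Encodable.decode (α := β) n) false fun b => decide (q a b)
  have htest : Primrec₂ test :=
    Primrec.option_casesOn (Primrec.decode.comp Primrec.snd) (Primrec.const false)
      (hq.decide.comp (Primrec.fst.comp Primrec.fst) Primrec.snd).to₂
  have htest_spec : ∀ a, (∃ b, q a b) ↔ ∃ n, test a n = true := fun a => by
    constructor
    · rintro ⟨b, hb⟩
      exact ⟨Encodable.encode b, by simp [test, hb]⟩
    · rintro ⟨n, hn⟩
      cases hd : Encodable.decode (α := β) n with
      | none => simp [test, hd] at hn
      | some b => exact ⟨b, by simpa [test, hd] using hn⟩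
  refine (Partrec.rfind (p := fun a n => Part.some (test a n))
    htest.to_comp.partrec₂).dom_re.of_eq fun a => ?_
  rw [h, htest_spec]
  exact Nat.rfind_dom.trans (by simp)

omit [Primcodable β] in
theorem exists_forall_mem_exists_lt {l : List β} {q : β → ℕ → Prop}
    (h : ∀ b ∈ l, ∃ n, q b n) : ∃ m, ∀ b ∈ l, ∃ n < m, q b n :=
  ((Filter.eventually_all_finite l.finite_toSet).2 fun b hb =>
    let ⟨n, hn⟩ := h b hb
    Filter.eventually_atTop.2 ⟨n + 1, fun _ hm => ⟨n, hm, hn⟩⟩).exists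

end RecursivelyEnumerable

section Words

variable {G : Type} [Group G] {k : ℕ}

@[simp]
theorem wordEval_nil (S : Fin k → G) : wordEval S [] = 1 := rfl

@[simp]
theorem wordEval_cons (S : Fin k → G) (i : Fin k) (w : List (Fin k)) :
    wordEval S (i :: w) = S i * wordEval S w := by
  simp [wordEval]

@[simp]
theorem wordEval_append (S : Fin k → G) (u v : List (Fin k)) :
    wordEval S (u ++ v) = wordEval S u * wordEval S v := by
  simp [wordEval]

def invWord (j : Fin k → Fin k) (w : List (Fin k)) : List (Fin k) :=
  w.reverse.map j

theorem primrec_invWord (j : Fin k → Fin k) : Primrec (invWord j) :=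
  Primrec.list_map Primrec.list_reverse ((Primrec.dom_finite j).comp Primrec.snd).to₂

theorem wordEval_invWord (S : Fin k → G) {j : Fin k → Fin k} (hj : ∀ i, S (j i) = (S i)⁻¹)
    (w : List (Fin k)) : wordEval S (invWord j w) = (wordEval S w)⁻¹ := by
  simp [invWord, wordEval, List.prod_inv_reverse, hj, Function.comp_def]

@[simp]
theorem freeWord_nil : freeWord ([] : List (Fin k)) = 1 := rfl

@[simp]
theorem freeWord_cons (i : Fin k) (w : List (Fin k)) :
    freeWord (i :: w) = FreeGroup.of i * freeWord w := by
  simp [freeWord]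

@[simp]
theorem freeWord_append (u v : List (Fin k)) :
    freeWord (u ++ v) = freeWord u * freeWord v := by
  simp [freeWord]

@[simp]
theorem lift_freeWord (S : Fin k → G) (w : List (Fin k)) :
    FreeGroup.lift S (freeWord w) = wordEval S w := by
  induction w with
  | nil => simp
  | cons i w ih => simp [ih]

end Words

section Presentations

variable {G : Type} [Group G] {k : ℕ}

theorem surjective_mk_freeWord {j : Fin k → Fin k} (N : Subgroup (FreeGroup (Fin k)))
    [N.Normal] (hj : ∀ i, FreeGroup.of i * FreeGroup.of (j i) ∈ N) :
    Function.Surjective fun w : List (Fin k) => (freeWord w : FreeGroup (Fin k) ⧸ N) := by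
  intro y
  induction y using QuotientGroup.induction_on with | H x => ?_
  induction x using FreeGroup.induction_on with
  | C1 => exact ⟨[], rfl⟩
  | of i => exact ⟨[i], by simp⟩
  | inv_of i _ =>
    refine ⟨[j i], ?_⟩
    rw [eq_comm, QuotientGroup.eq, inv_inv]
    simpa using hj i
  | mul x y hx hy =>
    obtain ⟨u, hu⟩ := hx
    obtain ⟨v, hv⟩ := hy
    exact ⟨u ++ v, by simp_all⟩

theorem ker_lift_eq_normalClosure_wp {S : Fin k → G} {j : Fin k → Fin k}
    (hj : ∀ i, S (j i) = (S i)⁻¹) :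
    (FreeGroup.lift S).ker = Subgroup.normalClosure (freeWord '' WP S) := by
  set N := Subgroup.normalClosure (freeWord '' WP S)
  have hN : N ≤ (FreeGroup.lift S).ker := by
    refine Subgroup.normalClosure_le_normal ?_
    rintro _ ⟨w, hw, rfl⟩
    simpa [WP] using hw
  refine le_antisymm (fun x hx => ?_) hN
  have hgen : ∀ i, FreeGroup.of i * FreeGroup.of (j i) ∈ N := fun i =>
    Subgroup.subset_normalClosure ⟨[i, j i], by simp [WP, hj], by simp⟩
  obtain ⟨w, hw⟩ := surjective_mk_freeWord N hgen (x : FreeGroup (Fin k) ⧸ N)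
  have hwWP : w ∈ WP S := by
    have hlift := congrArg (QuotientGroup.lift N (FreeGroup.lift S) hN) hw
    simpa [WP, MonoidHom.mem_ker.1 hx] using hlift
  rw [← QuotientGroup.eq_one_iff, ← hw, QuotientGroup.eq_one_iff]
  exact Subgroup.subset_normalClosure ⟨w, hwWP, rfl⟩

end Presentations

section NormalClosureCodes

variable {k : ℕ}

theorem FreeGroup.mk_flatMap {α β : Type} (f : β → List (α × Bool)) (L : List β) :
    FreeGroup.mk (L.flatMap f) = (L.map fun b => FreeGroup.mk (f b)).prod := by
  induction L with
  | nil => rfl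
  | cons b L ih =>
    rw [List.flatMap_cons, ← FreeGroup.mul_mk, ih, List.map_cons, List.prod_cons]

def posWord (w : List (Fin k)) : List (Fin k × Bool) :=
  w.map (·, true)

@[simp]
theorem mk_posWord (w : List (Fin k)) : FreeGroup.mk (posWord w) = freeWord w := by
  induction w with
  | nil => rfl
  | cons i w ih => rw [freeWord_cons, ← ih]; rfl

/-- `(u, r, b)` codes the conjugate `u r u⁻¹` if `b = true` and `u r⁻¹ u⁻¹` otherwise. -/
abbrev ConjCode (k : ℕ) : Type :=
  List (Fin k × Bool) × List (Fin k) × Bool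

def conjWord (t : ConjCode k) : List (Fin k × Bool) :=
  t.1 ++ (bif t.2.2 then posWord t.2.1 else FreeGroup.invRev (posWord t.2.1)) ++
    FreeGroup.invRev t.1

theorem mk_conjWord (u : List (Fin k × Bool)) (r : List (Fin k)) (b : Bool) :
    FreeGroup.mk (conjWord (u, r, b)) =
      FreeGroup.mk u * (bif b then freeWord r else (freeWord r)⁻¹) * (FreeGroup.mk u)⁻¹ := by
  cases b <;> simp [conjWord, ← FreeGroup.mul_mk, ← FreeGroup.inv_mk, mul_assoc]

theorem exists_conjCode_eq {R : Set (List (Fin k))} {y : FreeGroup (Fin k)}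
    (hy : y ∈ Group.conjugatesOfSet (freeWord '' R) ∨
      y⁻¹ ∈ Group.conjugatesOfSet (freeWord '' R)) :
    ∃ t : ConjCode k, t.2.1 ∈ R ∧ FreeGroup.mk (conjWord t) = y := by
  obtain ⟨b, hb⟩ : ∃ b : Bool,
      (bif b then y else y⁻¹) ∈ Group.conjugatesOfSet (freeWord '' R) := by
    rcases hy with hy | hy
    · exact ⟨true, hy⟩
    · exact ⟨false, hy⟩
  obtain ⟨_, ⟨r, hr, rfl⟩, hconj⟩ := Group.mem_conjugatesOfSet_iff.1 hb
  obtain ⟨g, hg⟩ := isConj_iff.1 hconj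
  refine ⟨(g.toWord, r, b), hr, ?_⟩
  rw [mk_conjWord, FreeGroup.mk_toWord]
  cases b <;> simp only [cond_true, cond_false] at hg ⊢
  · rw [← inv_inv y, ← hg]
    group
  · exact hg

theorem mem_normalClosure_iff_exists_conjCodes {R : Set (List (Fin k))}
    {x : FreeGroup (Fin k)} :
    x ∈ Subgroup.normalClosure (freeWord '' R) ↔
      ∃ L : List (ConjCode k), (∀ t ∈ L, t.2.1 ∈ R) ∧
        FreeGroup.mk (L.flatMap conjWord) = x := by
  constructor
  · intro hx
    have hx' : x ∈ Submonoid.closure (Group.conjugatesOfSet (freeWord '' R) ∪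
        (Group.conjugatesOfSet (freeWord '' R))⁻¹) := by
      rw [← Subgroup.closure_toSubmonoid]
      exact hx
    obtain ⟨l, hl, rfl⟩ := Submonoid.exists_list_of_mem_closure hx'
    choose! code hcodeR hcode_mk using fun y hy => exists_conjCode_eq (hl y hy)
    refine ⟨l.map code, by simpa using hcodeR, ?_⟩
    rw [FreeGroup.mk_flatMap, List.map_map]
    exact congrArg List.prod (List.map_congr_left hcode_mk |>.trans (List.map_id l))
  · rintro ⟨L, hL, rfl⟩
    rw [FreeGroup.mk_flatMap]
    refine list_prod_mem fun y hy => ?_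
    obtain ⟨⟨u, r, b⟩, ht, rfl⟩ := List.mem_map.1 hy
    have hr : freeWord r ∈ Subgroup.normalClosure (freeWord '' R) :=
      Subgroup.subset_normalClosure ⟨r, hL _ ht, rfl⟩
    rw [mk_conjWord]
    refine Subgroup.normalClosure_normal.conj_mem _ ?_ _
    cases b
    · exact inv_mem hr
    · exact hr

end NormalClosureCodes

section Computability

variable {α : Type} [Primcodable α]

theorem FreeGroup.primrec_invRev : Primrec (FreeGroup.invRev : List (α × Bool) → _) :=
  Primrec.list_reverse.comp (Primrec.list_map Primrec.id
    ((Primrec.fst.comp Primrec.snd).pair (Primrec.not.comp (Primrec.snd.comp Primrec.snd))).to₂)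

theorem FreeGroup.primrec_reduce [DecidableEq α] :
    Primrec (FreeGroup.reduce : List (α × Bool) → _) := by
  have hcancel : PrimrecRel fun x y : α × Bool => x.1 = y.1 ∧ x.2 = !y.2 :=
    (Primrec.eq.comp (Primrec.fst.comp Primrec.fst) (Primrec.fst.comp Primrec.snd)).and
      (Primrec.eq.comp (Primrec.snd.comp Primrec.fst)
        (Primrec.not.comp (Primrec.snd.comp Primrec.snd)))
  have hstep : Primrec₂ fun (x : α × Bool) (ih : List (α × Bool)) =>
      (List.casesOn ih [x] fun hd tl =>
        if x.1 = hd.1 ∧ x.2 = !hd.2 then tl else x :: hd :: tl : List (α × Bool)) :=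
    Primrec.list_casesOn Primrec.snd (Primrec.list_cons.comp Primrec.fst (Primrec.const []))
      (Primrec.ite (hcancel.comp (Primrec.fst.comp Primrec.fst) (Primrec.fst.comp Primrec.snd))
        (Primrec.snd.comp Primrec.snd)
        (Primrec.list_cons.comp (Primrec.fst.comp Primrec.fst)
          (Primrec.list_cons.comp (Primrec.fst.comp Primrec.snd)
            (Primrec.snd.comp Primrec.snd)))).to₂
  exact (Primrec.list_rec Primrec.id (Primrec.const [])
    (hstep.comp (Primrec.fst.comp Primrec.snd)
      (Primrec.snd.comp (Primrec.snd.comp Primrec.snd))).to₂).of_eq fun _ => rfl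

variable {k : ℕ}

theorem primrec_posWord : Primrec (posWord (k := k)) :=
  Primrec.list_map Primrec.id (Primrec.snd.pair (Primrec.const true)).to₂

theorem primrec_conjWord : Primrec (conjWord (k := k)) := by
  have hrel : Primrec fun t : ConjCode k => posWord t.2.1 :=
    primrec_posWord.comp (Primrec.fst.comp Primrec.snd)
  exact Primrec.list_append.comp
    (Primrec.list_append.comp Primrec.fst
      (Primrec.cond (Primrec.snd.comp Primrec.snd) hrel (FreeGroup.primrec_invRev.comp hrel)))
    (FreeGroup.primrec_invRev.comp Primrec.fst)

end Computability

section WordProblem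

variable {G : Type} [Group G] {k : ℕ}

theorem mem_wp_iff_mem_normalClosure {S : Fin k → G} {R : Set (List (Fin k))}
    (hker : (FreeGroup.lift S).ker = Subgroup.normalClosure (freeWord '' R))
    (w : List (Fin k)) :
    w ∈ WP S ↔ freeWord w ∈ Subgroup.normalClosure (freeWord '' R) := by
  rw [← hker, MonoidHom.mem_ker, lift_freeWord]
  rfl

/-- The witness for `w ∈ WP S` is a list of codes of conjugates of relators whose product is
`freeWord w`, together with a common bound on the searches certifying that the relators lie
in `R`; both conditions are decidable, free reduction deciding equality in the free group. -/
theorem RecursivelyPresented.rePred_wp {S : Fin k → G} (h : RecursivelyPresented S) :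
    REPred (· ∈ WP S) := by
  obtain ⟨R, hR, hker⟩ := h
  obtain ⟨q, hq, hRq⟩ := REPred.exists_primrecRel hR
  have hcert : PrimrecRel fun (w : List (Fin k)) (c : ℕ × List (ConjCode k)) =>
      (∀ t ∈ c.2, ∃ n < c.1, q t.2.1 n) ∧
        FreeGroup.reduce (c.2.flatMap conjWord) = FreeGroup.reduce (posWord w) := by
    have hbounded : PrimrecRel fun (t : ConjCode k) (m : ℕ) => ∃ n < m, q t.2.1 n :=
      ((hq.comp (Primrec.fst.comp (Primrec.snd.comp Primrec.snd)) Primrec.fst).primrecRel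
        |>.exists_mem_list.comp (Primrec.list_range.comp Primrec.snd) Primrec.fst).of_eq
        (by simp)
    exact (hbounded.forall_mem_list.comp (Primrec.snd.comp Primrec.snd)
        (Primrec.fst.comp Primrec.snd)).and
      (Primrec.eq.comp
        (FreeGroup.primrec_reduce.comp
          (Primrec.list_flatMap (Primrec.snd.comp Primrec.snd)
            (primrec_conjWord.comp Primrec.snd).to₂))
        (FreeGroup.primrec_reduce.comp (primrec_posWord.comp Primrec.fst)))
  refine REPred.of_exists_primrecRel hcert fun w => ?_
  rw [mem_wp_iff_mem_normalClosure hker, mem_normalClosure_iff_exists_conjCodes, ← mk_posWord]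
  constructor
  · rintro ⟨L, hL, hmk⟩
    obtain ⟨m, hm⟩ := exists_forall_mem_exists_lt fun t ht => (hRq _).1 (hL t ht)
    exact ⟨(m, L), hm, FreeGroup.reduce.sound hmk⟩
  · rintro ⟨⟨m, L⟩, hL, hred⟩
    exact ⟨L, fun t ht => (hRq _).2 ((hL t ht).imp fun _ => And.right),
      FreeGroup.reduce.exact hred⟩

theorem recursivelyPresented_of_rePred_wp {S : Fin k → G} {j : Fin k → Fin k}
    (hj : ∀ i, S (j i) = (S i)⁻¹) (h : REPred (· ∈ WP S)) : RecursivelyPresented S :=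
  ⟨WP S, h, ker_lift_eq_normalClosure_wp hj⟩

end WordProblem

section PatternCodings

variable {G : Type} [Group G] {k : ℕ} {A : Type}

theorem not_consistent_iff {S : Fin k → G} {j : Fin k → Fin k}
    (hj : ∀ i, S (j i) = (S i)⁻¹) (c : PatternCoding k A) :
    ¬ Consistent S c ↔ ∃ p ∈ c, ∃ q ∈ c, p.2 ≠ q.2 ∧ p.1 ++ invWord j q.1 ∈ WP S := by
  simp only [Consistent, WP, Set.mem_ofPred_eq, wordEval_append, wordEval_invWord S hj,
    mul_inv_eq_one]
  push Not
  simp only [and_comm]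

theorem mem_wp_iff_not_consistent {S : Fin k → G} {a b : A} (hab : a ≠ b)
    (w : List (Fin k)) :
    w ∈ WP S ↔ ¬ Consistent S [(w, a), ([], b)] := by
  simp [Consistent, WP, hab, hab.symm, eq_comm]

variable [Primcodable A]

theorem rePred_not_consistent {S : Fin k → G} {j : Fin k → Fin k}
    (hj : ∀ i, S (j i) = (S i)⁻¹) (h : REPred (· ∈ WP S)) :
    REPred fun c : PatternCoding k A => ¬ Consistent S c := by
  obtain ⟨r, hr, hWPr⟩ := REPred.exists_primrecRel h
  have hpair : PrimrecRel fun (q : List (Fin k) × A)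
      (x : (List (Fin k) × A) × PatternCoding k A × ℕ) =>
      x.1.2 ≠ q.2 ∧ r (x.1.1 ++ invWord j q.1) x.2.2 :=
    (Primrec.eq.comp (Primrec.snd.comp (Primrec.fst.comp Primrec.snd))
      (Primrec.snd.comp Primrec.fst)).not.and
      (hr.comp (Primrec.list_append.comp (Primrec.fst.comp (Primrec.fst.comp Primrec.snd))
        ((primrec_invWord j).comp (Primrec.fst.comp Primrec.fst)))
        (Primrec.snd.comp (Primrec.snd.comp Primrec.snd)))
  have hinner : PrimrecRel fun (p : List (Fin k) × A) (y : PatternCoding k A × ℕ) =>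
      ∃ q ∈ y.1, p.2 ≠ q.2 ∧ r (p.1 ++ invWord j q.1) y.2 :=
    hpair.exists_mem_list.comp (Primrec.fst.comp Primrec.snd) Primrec.id
  have hcheck : PrimrecRel fun (c : PatternCoding k A) (n : ℕ) =>
      ∃ p ∈ c, ∃ q ∈ c, p.2 ≠ q.2 ∧ r (p.1 ++ invWord j q.1) n :=
    hinner.exists_mem_list.comp Primrec.fst Primrec.id
  refine REPred.of_exists_primrecRel hcheck fun c => ?_
  simp only [not_consistent_iff hj, hWPr]
  constructor
  · rintro ⟨p, hp, q, hq, hne, n, hn⟩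
    exact ⟨n, p, hp, q, hq, hne, hn⟩
  · rintro ⟨n, p, hp, q, hq, hne, hn⟩
    exact ⟨p, hp, q, hq, hne, n, hn⟩

theorem rePred_wp_of_rePred_not_consistent {S : Fin k → G} {a b : A} (hab : a ≠ b)
    (h : REPred fun c : PatternCoding k A => ¬ Consistent S c) : REPred (· ∈ WP S) := by
  have hcode : Computable fun w : List (Fin k) => [(w, a), (([] : List (Fin k)), b)] :=
    (Primrec.list_cons.comp (Primrec.id.pair (Primrec.const a))
      (Primrec.const [(([] : List (Fin k)), b)])).to_comp
  exact (REPred.comp h hcode).of_eq fun w => (mem_wp_iff_not_consistent hab w).symm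

end PatternCodings

/-- For a finitely generated group `G` and an alphabet with at least two
symbols, the following are equivalent: `G` is recursively presented; the word problem of `G`
is recursively enumerable; the set of inconsistent pattern codings is recursively
enumerable. -/
theorem recursivelyPresented_tfae
    {G : Type} [Group G] {k : ℕ} (S : Fin k → G) (hS : IsGenData S)
    (A : Type) [Fintype A] [Primcodable A] (hA : 2 ≤ Fintype.card A) :
    (RecursivelyPresented S ↔ REPred (· ∈ WP S)) ∧
    (REPred (· ∈ WP S) ↔ REPred fun c : PatternCoding k A => ¬ Consistent S c) := by
  obtain ⟨-, hsymm, -⟩ := hS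
  choose j hj using hsymm
  obtain ⟨a, b, hab⟩ := Fintype.exists_pair_of_one_lt_card hA
  exact ⟨⟨RecursivelyPresented.rePred_wp, recursivelyPresented_of_rePred_wp hj⟩,
    ⟨rePred_not_consistent hj, rePred_wp_of_rePred_not_consistent hab⟩⟩

end SDG
end
end
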